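/- Let k ≥ 4 be an integer, K0 > 0, K1 = (2k+1)!!·K0, γ = k/3 − 1/2, p ∈ (2,3), B > 0, and C_g > 0. Let g : (0,∞) → ℝ satisfy g(y) ≥ −C_g·y^{−5} for all y > 0. For δ ∈ (0, K1/2) define f_δ^±(y,τ) = (K1 ± δ)·e^{3γτ}·φ_k(y) ± (B·K1²·e^{6γτ}·g(y) + e^{(p+1)γτ}·y^{−p}). Then there exists R ≥ 1, depending only on k, K0, C_g, B and p, such that for every δ ∈ (0, K1/2) and all (y,τ) with y ≥ R·e^{γτ} one has f_δ^−(y,τ) < f_{δ/2}^−(y,τ) < f_{δ/2}^+(y,τ) < f_δ^+(y,τ). -/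

import Mathlib

open Filter Set

/-- The eigenfunction `φ_k(y) = y^{-2} Σ_{n=0}^k (binom(k,n)/(2n+1)!!) y^{2n}`. -/
noncomputable def phik (k : ℕ) (y : ℝ) : ℝ :=
  y ^ (-2 : ℤ) * ∑ n ∈ Finset.range (k + 1),
    ((k.choose n : ℝ) / (Nat.doubleFactorial (2 * n + 1) : ℝ)) * y ^ (2 * n)

/-- The intermediate-region barriers with sign `ε = ±1`. -/
noncomputable def fbar (k : ℕ) (K1 γ B p : ℝ) (g : ℝ → ℝ) (δ ε y τ : ℝ) : ℝ :=
  (K1 + ε * δ) * Real.exp (3 * γ * τ) * phik k y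
    + ε * (B * K1 ^ 2 * Real.exp (6 * γ * τ) * g y
        + Real.exp ((p + 1) * γ * τ) * y ^ (-p))

/-!
Consecutive barriers differ by `(δ/2) e^{3γτ} φ_k(y)`, except `f_{δ/2}^+ - f_{δ/2}^-`, which is
`δ e^{3γτ} φ_k(y) + 2X` with `X = B K1² e^{6γτ} g(y) + e^{(p+1)γτ} y^{-p}`; so the nesting reduces to
`φ_k > 0` and `X > 0`.
By the lower bound on `g`, `X > 0` follows from `B K1² Cg e^{6γτ} y^{-5} < e^{(p+1)γτ} y^{-p}`,
i.e. `C e^{(5-p)γτ} < y^{5-p}` with `C = B K1² Cg`, which holds as soon as `y ≥ (1 + C) e^{γτ}`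
because `5 - p ≥ 1`.
-/

open Real

lemma phik_pos (k : ℕ) {y : ℝ} (hy : 0 < y) : 0 < phik k y := by
  refine mul_pos (zpow_pos hy _) (Finset.sum_pos' (fun n _ => by positivity) ⟨0, ?_, ?_⟩)
  · simp
  · simp [Nat.doubleFactorial]

lemma mul_exp_mul_lt_rpow {C q t y : ℝ} (hC : 0 ≤ C) (hq : 1 ≤ q)
    (hy : (1 + C) * exp t ≤ y) : C * exp (q * t) < y ^ q :=
  calc C * exp (q * t) < (1 + C) * exp (q * t) := by gcongr; linarith
    _ ≤ (1 + C) ^ q * exp (q * t) := by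
      gcongr
      simpa using Real.rpow_le_rpow_of_exponent_le (by linarith : 1 ≤ 1 + C) hq
    _ = ((1 + C) * exp t) ^ q := by
      rw [Real.mul_rpow (by linarith) (exp_nonneg t), ← exp_mul, mul_comm t]
    _ ≤ y ^ q := by gcongr

lemma barrier_correction_pos {A Cg p γ τ y : ℝ} {g : ℝ → ℝ} (hA : 0 ≤ A) (hCg : 0 < Cg)
    (hp : p ≤ 4) (hg : -(Cg * y ^ (-5 : ℤ)) ≤ g y) (hy : (1 + A * Cg) * exp (γ * τ) ≤ y) :
    0 < A * exp (6 * γ * τ) * g y + exp ((p + 1) * γ * τ) * y ^ (-p) := by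
  have hy0 : 0 < y := lt_of_lt_of_le (by positivity) hy
  have hdom : A * Cg * exp ((5 - p) * (γ * τ)) < y ^ (5 - p) :=
    mul_exp_mul_lt_rpow (by positivity) (by linarith) hy
  have hsplit : y ^ (-p) = y ^ (5 - p) * y ^ (-5 : ℤ) := by
    rw [← Real.rpow_intCast, ← Real.rpow_add hy0]
    congr 1
    push_cast
    ring
  have hexp : exp (6 * γ * τ) = exp ((p + 1) * γ * τ) * exp ((5 - p) * (γ * τ)) := by
    rw [← exp_add]; ring_nf
  have hg' : -(A * Cg * exp (6 * γ * τ) * y ^ (-5 : ℤ)) ≤ A * exp (6 * γ * τ) * g y := by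
    have := mul_le_mul_of_nonneg_left hg (by positivity : 0 ≤ A * exp (6 * γ * τ))
    linarith
  have hkey : A * Cg * exp (6 * γ * τ) * y ^ (-5 : ℤ) < exp ((p + 1) * γ * τ) * y ^ (-p) := by
    rw [hsplit, hexp]
    have := mul_lt_mul_of_pos_left hdom
      (by positivity : 0 < exp ((p + 1) * γ * τ) * y ^ (-5 : ℤ))
    linarith
  linarith

lemma fbar_nested {k : ℕ} {K1 γ B p δ y τ : ℝ} {g : ℝ → ℝ} (hδ : 0 < δ) (hy : 0 < y)
    (hX : 0 < B * K1 ^ 2 * exp (6 * γ * τ) * g y + exp ((p + 1) * γ * τ) * y ^ (-p)) :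
    fbar k K1 γ B p g δ (-1) y τ < fbar k K1 γ B p g (δ / 2) (-1) y τ ∧
      fbar k K1 γ B p g (δ / 2) (-1) y τ < fbar k K1 γ B p g (δ / 2) 1 y τ ∧
      fbar k K1 γ B p g (δ / 2) 1 y τ < fbar k K1 γ B p g δ 1 y τ := by
  have hδφ : 0 < δ * (exp (3 * γ * τ) * phik k y) :=
    mul_pos hδ (mul_pos (exp_pos _) (phik_pos k hy))
  refine ⟨?_, ?_, ?_⟩ <;> simp only [fbar] <;> linarith

theorem stmt_7_general
    (k : ℕ)
    (K1 : ℝ)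
    (γ : ℝ)
    (p : ℝ) (hp : p ∈ Set.Ioo (2:ℝ) 3)
    (B : ℝ) (hB : 0 < B)
    (Cg : ℝ) (hCg : 0 < Cg)
    (g : ℝ → ℝ) (hgbd : ∀ y > (0:ℝ), -(Cg * y ^ (-5 : ℤ)) ≤ g y) :
    ∃ R ≥ (1:ℝ), ∀ δ ∈ Set.Ioo (0:ℝ) (K1 / 2), ∀ τ y : ℝ, R * Real.exp (γ * τ) ≤ y →
      fbar k K1 γ B p g δ (-1) y τ < fbar k K1 γ B p g (δ / 2) (-1) y τ ∧
      fbar k K1 γ B p g (δ / 2) (-1) y τ < fbar k K1 γ B p g (δ / 2) 1 y τ ∧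
      fbar k K1 γ B p g (δ / 2) 1 y τ < fbar k K1 γ B p g δ 1 y τ := by
  have hA : 0 ≤ B * K1 ^ 2 := by positivity
  refine ⟨1 + B * K1 ^ 2 * Cg, le_add_of_nonneg_right (mul_nonneg hA hCg.le), ?_⟩
  intro δ hδ τ y hy
  have hy0 : 0 < y := lt_of_lt_of_le (by positivity) hy
  exact fbar_nested hδ.1 hy0
    (barrier_correction_pos hA hCg (by linarith [hp.2]) (hgbd y hy0) hy)

/-- Nesting of the intermediate barriers:
`f_δ^- < f_{δ/2}^- < f_{δ/2}^+ < f_δ^+` for `y ≥ R e^{γτ}`. -/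
theorem stmt_7
    (k : ℕ) (hk : 4 ≤ k) (K0 : ℝ) (hK0 : 0 < K0)
    (K1 : ℝ) (hK1 : K1 = (Nat.doubleFactorial (2 * k + 1) : ℝ) * K0)
    (γ : ℝ) (hγ : γ = (k : ℝ) / 3 - 1 / 2)
    (p : ℝ) (hp : p ∈ Set.Ioo (2:ℝ) 3)
    (B : ℝ) (hB : 0 < B)
    (Cg : ℝ) (hCg : 0 < Cg)
    (g : ℝ → ℝ) (hgbd : ∀ y > (0:ℝ), -(Cg * y ^ (-5 : ℤ)) ≤ g y) :
    ∃ R ≥ (1:ℝ), ∀ δ ∈ Set.Ioo (0:ℝ) (K1 / 2), ∀ τ y : ℝ, R * Real.exp (γ * τ) ≤ y →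
      fbar k K1 γ B p g δ (-1) y τ < fbar k K1 γ B p g (δ / 2) (-1) y τ ∧
      fbar k K1 γ B p g (δ / 2) (-1) y τ < fbar k K1 γ B p g (δ / 2) 1 y τ ∧
      fbar k K1 γ B p g (δ / 2) 1 y τ < fbar k K1 γ B p g δ 1 y τ :=
  stmt_7_general k K1 γ p hp B hB Cg hCg g hgbd
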